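/- Let g : ℝⁿ → ℝ be convex and L-Lipschitz with ∫ exp(−g(x)) dx = 1, let λ > 0, let g^λ be the Moreau–Yosida envelope of g, let Z_λ = ∫ exp(−g^λ(z)) dz, and set π(x) = exp(−g(x)) and π^λ(x) = exp(−g^λ(x))/Z_λ. Then for any f : ℝⁿ → ℝ that is integrable with respect to both π(x)dx and π^λ(x)dx, one has |∫ f π^λ dx − ∫ f π dx| ≤ (exp(L²λ) − 1) ∫ |f| π dx. -/

import Mathlib

/-!
A Lipschitz `g` loses at most `L²λ/2` under Moreau–Yosida smoothing: by Young's inequality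
`L‖x - z‖ ≤ ‖x - z‖²/(2λ) + L²λ/2`, so `g - L²λ/2 ≤ g^λ ≤ g`. Hence
`π ≤ exp(-g^λ) ≤ C π` with `C = exp(L²λ/2)`, the normaliser satisfies `1 ≤ Z_λ ≤ C`, and
`|π^λ - π| ≤ (C - 1) π ≤ (exp(L²λ) - 1) π` pointwise; integrate against `|f|`.
-/

open MeasureTheory

/-- The Moreau–Yosida envelope of `g` with parameter `lam`. -/
noncomputable def mye {n : ℕ} (g : EuclideanSpace ℝ (Fin n) → ℝ) (lam : ℝ)
    (x : EuclideanSpace ℝ (Fin n)) : ℝ :=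
  ⨅ z : EuclideanSpace ℝ (Fin n), (g z + ‖x - z‖ ^ 2 / (2 * lam))

section MoreauYosida

variable {n : ℕ} {g : EuclideanSpace ℝ (Fin n) → ℝ} {L lam : ℝ}

lemma sub_le_add_sq_div_of_lipschitz (hLip : ∀ x z, g x - g z ≤ L * ‖x - z‖) (hlam : 0 < lam)
    (x z : EuclideanSpace ℝ (Fin n)) :
    g x - L ^ 2 * lam / 2 ≤ g z + ‖x - z‖ ^ 2 / (2 * lam) := by
  have young : L * ‖x - z‖ ≤ ‖x - z‖ ^ 2 / (2 * lam) + L ^ 2 * lam / 2 := by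
    have hsq : ‖x - z‖ ^ 2 / (2 * lam) + L ^ 2 * lam / 2 - L * ‖x - z‖ =
        (‖x - z‖ - L * lam) ^ 2 / (2 * lam) := by
      field_simp
      ring
    linarith [hsq ▸ (by positivity : 0 ≤ (‖x - z‖ - L * lam) ^ 2 / (2 * lam))]
  linarith [hLip x z]

lemma mye_bddBelow (hLip : ∀ x z, g x - g z ≤ L * ‖x - z‖) (hlam : 0 < lam)
    (x : EuclideanSpace ℝ (Fin n)) :
    BddBelow (Set.range fun z => g z + ‖x - z‖ ^ 2 / (2 * lam)) :=
  ⟨g x - L ^ 2 * lam / 2, by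
    rintro _ ⟨z, rfl⟩
    exact sub_le_add_sq_div_of_lipschitz hLip hlam x z⟩

lemma mye_le_self (hLip : ∀ x z, g x - g z ≤ L * ‖x - z‖) (hlam : 0 < lam)
    (x : EuclideanSpace ℝ (Fin n)) : mye g lam x ≤ g x := by
  simpa [mye] using ciInf_le (mye_bddBelow hLip hlam x) x

lemma sub_le_mye (hLip : ∀ x z, g x - g z ≤ L * ‖x - z‖) (hlam : 0 < lam)
    (x : EuclideanSpace ℝ (Fin n)) : g x - L ^ 2 * lam / 2 ≤ mye g lam x :=
  le_ciInf (sub_le_add_sq_div_of_lipschitz hLip hlam x)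

lemma measurable_mye (hLip : ∀ x z, g x - g z ≤ L * ‖x - z‖) (hlam : 0 < lam) :
    Measurable (mye g lam) :=
  (upperSemicontinuous_ciInf (mye_bddBelow hLip hlam) fun _ =>
    (by fun_prop : Continuous _).upperSemicontinuous).measurable

end MoreauYosida

lemma abs_div_sub_le_of_le_of_le {a b C Z : ℝ} (ha : 0 ≤ a) (hab : a ≤ b) (hbC : b ≤ C * a)
    (hZ1 : 1 ≤ Z) (hZC : Z ≤ C) : |b / Z - a| ≤ (C - 1) * a := by
  have hZ0 : 0 < Z := one_pos.trans_le hZ1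
  have hb_div : b / Z ≤ b := div_le_self (ha.trans hab) hZ1
  have ha_div : a / C ≤ b / Z := div_le_div₀ (ha.trans hab) hab hZ0 hZC
  have hC1 : 1 ≤ C := hZ1.trans hZC
  have ha_sub : a - a / C = (C - 1) * (a / C) := by
    field_simp
  have ha_div_le : (C - 1) * (a / C) ≤ (C - 1) * a :=
    mul_le_mul_of_nonneg_left (div_le_self ha hC1) (sub_nonneg.2 hC1)
  rw [abs_le]
  constructor <;> linarith

section Integrals

variable {α : Type*} [MeasurableSpace α] {μ : Measure α}

lemma abs_integral_mul_sub_le {f p r : α → ℝ} {K : ℝ} (hp : ∀ x, 0 ≤ p x)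
    (hrp : ∀ x, |r x - p x| ≤ K * p x)
    (hfr : Integrable (fun x => f x * r x) μ) (hfp : Integrable (fun x => f x * p x) μ) :
    |(∫ x, f x * r x ∂μ) - ∫ x, f x * p x ∂μ| ≤ K * ∫ x, |f x| * p x ∂μ := by
  have hfp_abs : Integrable (fun x => |f x| * p x) μ := by
    simpa [abs_mul, abs_of_nonneg (hp _)] using hfp.abs
  rw [← integral_sub hfr hfp, ← integral_const_mul]
  refine (abs_integral_le_integral_abs).trans (integral_mono (hfr.sub hfp).abs
    (hfp_abs.const_mul K) fun x => ?_)
  calc |f x * r x - f x * p x| = |f x| * |r x - p x| := by rw [← mul_sub, abs_mul]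
    _ ≤ |f x| * (K * p x) := mul_le_mul_of_nonneg_left (hrp x) (abs_nonneg _)
    _ = K * (|f x| * p x) := by ring

lemma abs_integral_mul_div_integral_sub_le {f p q : α → ℝ} {C : ℝ} (hp : ∀ x, 0 ≤ p x)
    (hpq : ∀ x, p x ≤ q x) (hqC : ∀ x, q x ≤ C * p x) (hp1 : ∫ x, p x ∂μ = 1)
    (hq : AEStronglyMeasurable q μ) (hfp : Integrable (fun x => f x * p x) μ)
    (hfq : Integrable (fun x => f x * (q x / ∫ z, q z ∂μ)) μ) :
    |(∫ x, f x * (q x / ∫ z, q z ∂μ) ∂μ) - ∫ x, f x * p x ∂μ| ≤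
      (C - 1) * ∫ x, |f x| * p x ∂μ := by
  have hp_int : Integrable p μ := Integrable.of_integral_ne_zero (by simp [hp1])
  have hq_int : Integrable q μ := (hp_int.const_mul C).mono' hq <| .of_forall fun x => by
    rw [Real.norm_of_nonneg ((hp x).trans (hpq x))]
    exact hqC x
  have hZ1 : 1 ≤ ∫ z, q z ∂μ := hp1 ▸ integral_mono hp_int hq_int hpq
  have hZC : ∫ z, q z ∂μ ≤ C :=
    calc ∫ z, q z ∂μ ≤ ∫ z, C * p z ∂μ := integral_mono hq_int (hp_int.const_mul C) hqC
      _ = C := by rw [integral_const_mul, hp1, mul_one]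
  exact abs_integral_mul_sub_le hp
    (fun x => abs_div_sub_le_of_le_of_le (hp x) (hpq x) (hqC x) hZ1 hZC) hfq hfp

end Integrals

theorem stmt_4_general {n : ℕ} (g : EuclideanSpace ℝ (Fin n) → ℝ) (L lam : ℝ)
    (hLip : ∀ x y, |g x - g y| ≤ L * ‖x - y‖)
    (hlam : 0 < lam)
    (hnorm : ∫ x : EuclideanSpace ℝ (Fin n), Real.exp (-g x) = 1)
    (f : EuclideanSpace ℝ (Fin n) → ℝ)
    (hf : Integrable (fun x => f x * Real.exp (-g x)))
    (hflam : Integrable (fun x =>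
      f x * (Real.exp (-(mye g lam x)) /
        ∫ z : EuclideanSpace ℝ (Fin n), Real.exp (-(mye g lam z))))) :
    |(∫ x, f x * (Real.exp (-(mye g lam x)) /
          ∫ z : EuclideanSpace ℝ (Fin n), Real.exp (-(mye g lam z)))) -
        ∫ x, f x * Real.exp (-g x)| ≤
      (Real.exp (L ^ 2 * lam) - 1) * ∫ x, |f x| * Real.exp (-g x) := by
  have hLip' : ∀ x z, g x - g z ≤ L * ‖x - z‖ := fun x z => le_of_abs_le (hLip x z)
  calc _ ≤ (Real.exp (L ^ 2 * lam / 2) - 1) * ∫ x, |f x| * Real.exp (-g x) :=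
        abs_integral_mul_div_integral_sub_le (fun _ => (Real.exp_pos _).le)
          (fun x => Real.exp_le_exp.2 (neg_le_neg (mye_le_self hLip' hlam x)))
          (fun x => by
            rw [← Real.exp_add]
            exact Real.exp_le_exp.2 (by linarith [sub_le_mye hLip' hlam x]))
          hnorm (measurable_mye hLip' hlam).neg.exp.aestronglyMeasurable hf hflam
    _ ≤ (Real.exp (L ^ 2 * lam) - 1) * ∫ x, |f x| * Real.exp (-g x) := by
        gcongr
        exact half_le_self (by positivity)

theorem stmt_4 {n : ℕ} (g : EuclideanSpace ℝ (Fin n) → ℝ) (L lam : ℝ)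
    (hconv : ConvexOn ℝ Set.univ g)
    (hLip : ∀ x y, |g x - g y| ≤ L * ‖x - y‖)
    (hlam : 0 < lam)
    (hnorm : ∫ x : EuclideanSpace ℝ (Fin n), Real.exp (-g x) = 1)
    (f : EuclideanSpace ℝ (Fin n) → ℝ)
    (hf : Integrable (fun x => f x * Real.exp (-g x)))
    (hflam : Integrable (fun x =>
      f x * (Real.exp (-(mye g lam x)) /
        ∫ z : EuclideanSpace ℝ (Fin n), Real.exp (-(mye g lam z))))) :
    |(∫ x, f x * (Real.exp (-(mye g lam x)) /
          ∫ z : EuclideanSpace ℝ (Fin n), Real.exp (-(mye g lam z)))) -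
        ∫ x, f x * Real.exp (-g x)| ≤
      (Real.exp (L ^ 2 * lam) - 1) * ∫ x, |f x| * Real.exp (-g x) :=
  stmt_4_general g L lam hLip hlam hnorm f hf hflam
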